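/- If t is a simply typed λ-term all of whose redexes have degree at most d ≥ 1, then all redexes of its parallel reduct t* have degree at most d − 1. -/

import Mathlib

/-- Simple types over a single base type `o`. -/
inductive Ty : Type
  | o : Ty
  | arr : Ty → Ty → Ty
deriving DecidableEq

/-- Degree of a simple type: the height of its syntax tree. -/
def Ty.deg : Ty → Nat
  | .o => 0
  | .arr a b => max a.deg b.deg + 1

/-- Church-style simply typed λ-terms (de Bruijn indices, annotated λ). -/
inductive CTm : Type
  | var : Nat → CTm
  | lam : Ty → CTm → CTm
  | app : CTm → CTm → CTm
deriving DecidableEq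

namespace CTm

def lift (d : Nat) : Nat → CTm → CTm
  | k, var n => if n < k then var n else var (n + d)
  | k, lam A t => lam A (lift d (k + 1) t)
  | k, app t u => app (lift d k t) (lift d k u)

def subst : CTm → Nat → CTm → CTm
  | var n, k, u => if n = k then lift k 0 u else if k < n then var (n - 1) else var n
  | lam A t, k, u => lam A (subst t (k + 1) u)
  | app a b, k, u => app (subst a k u) (subst b k u)

/-- Full parallel reduction `t*`. -/
def pstar : CTm → CTm
  | var n => var n
  | lam A t => lam A (pstar t)
  | app (lam _ t) u => subst (pstar t) 0 (pstar u)
  | app (var n) u => app (var n) (pstar u)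
  | app (app a b) u => app (pstar (app a b)) (pstar u)

/-- Type of a term in a context (de Bruijn): `some A` iff well-typed of type `A`. -/
def typeof : List Ty → CTm → Option Ty
  | Γ, var n => Γ[n]?
  | Γ, lam A t => (typeof (A :: Γ) t).map (Ty.arr A)
  | Γ, app t u =>
    match typeof Γ t, typeof Γ u with
    | some (.arr A B), some A' => if A = A' then some B else none
    | _, _ => none

/-- All redexes of `t` (in context `Γ`) have degree at most `d`.
The degree of a redex `(λx^A.t) u` with `t : B` is `deg (A → B)`. -/
def RedexBound (d : Nat) : List Ty → CTm → Prop
  | _, var _ => True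
  | Γ, lam A t => RedexBound d (A :: Γ) t
  | Γ, app (lam A t) u =>
      (∀ B, typeof (A :: Γ) t = some B → (Ty.arr A B).deg ≤ d) ∧
        RedexBound d (A :: Γ) t ∧ RedexBound d Γ u
  | Γ, app (var n) u => RedexBound d Γ (var n) ∧ RedexBound d Γ u
  | Γ, app (app a b) u => RedexBound d Γ (app a b) ∧ RedexBound d Γ u

/-- β-normal: contains no redex. -/
def Normal : CTm → Prop
  | var _ => True
  | lam _ t => Normal t
  | app t u => (∀ A t', t ≠ lam A t') ∧ Normal t ∧ Normal u

/-- Single-step β-reduction. -/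
inductive Step : CTm → CTm → Prop
  | beta (A : Ty) (t u : CTm) : Step (app (lam A t) u) (subst t 0 u)
  | appL {t t' : CTm} (u : CTm) : Step t t' → Step (app t u) (app t' u)
  | appR (t : CTm) {u u' : CTm} : Step u u' → Step (app t u) (app t u')
  | lam (A : Ty) {t t' : CTm} : Step t t' → Step (lam A t) (lam A t')

/-- β-convertibility. -/
def Conv : CTm → CTm → Prop := Relation.EqvGen Step

end CTm

/-! All redexes of `t` are contracted in `t*`, so every redex of `t*` is created by a contraction.
Contracting `(λx^A.s) u` turns subterms `x v` into `u* v*`, new redexes of degree `deg A`; and if the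
contracted redex heads an application `(λx^A.s) u w`, the result `s*{x := u*} w*` may be a new redex,
of degree `deg B` where `s : B`. Both are below `deg (A → B)`. -/

theorem Ty.deg_le_pred_of_deg_arr_le {A B : Ty} {d : Nat} (h : (Ty.arr A B).deg ≤ d) :
    A.deg ≤ d - 1 ∧ B.deg ≤ d - 1 := by
  simp only [Ty.deg] at h
  omega

namespace CTm

def IsLam : CTm → Prop
  | lam _ _ => True
  | _ => False

theorem typeof_lam_eq_some {Γ : List Ty} {A C : Ty} {t : CTm} :
    typeof Γ (lam A t) = some C ↔ ∃ B, typeof (A :: Γ) t = some B ∧ Ty.arr A B = C := by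
  simp [typeof]

theorem typeof_app_eq_some {Γ : List Ty} {t u : CTm} {B : Ty} :
    typeof Γ (app t u) = some B ↔
      ∃ A, typeof Γ t = some (Ty.arr A B) ∧ typeof Γ u = some A := by
  simp only [typeof]
  rcases typeof Γ t with _ | _ | ⟨A, B'⟩ <;> rcases typeof Γ u with _ | A' <;> simp

/-- The redex `(λx^A.s) u` has the degree of the type `A → B` of its head. -/
theorem redexBound_app_iff {e : Nat} {Γ : List Ty} {t u : CTm} :
    RedexBound e Γ (app t u) ↔
      (IsLam t → ∀ C, typeof Γ t = some C → C.deg ≤ e) ∧ RedexBound e Γ t ∧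
        RedexBound e Γ u := by
  cases t <;> simp [RedexBound, IsLam, typeof_lam_eq_some]

theorem typeof_lift (Δ₀ Δ Γ : List Ty) (u : CTm) :
    typeof (Δ₀ ++ (Δ ++ Γ)) (lift Δ.length Δ₀.length u) = typeof (Δ₀ ++ Γ) u := by
  induction u generalizing Δ₀ with
  | var n =>
    by_cases h : n < Δ₀.length
    · simp [lift, typeof, h, List.getElem?_append_left]
    · simp only [lift, typeof, h, if_false]
      rw [List.getElem?_append_right (by omega), List.getElem?_append_right (by omega),
        List.getElem?_append_right (by omega)]
      congr 1
      omega
  | lam A t ih => exact congrArg (Option.map (Ty.arr A)) (ih (A :: Δ₀))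
  | app a b iha ihb => simp only [lift, typeof, iha, ihb]

theorem typeof_subst (Δ Γ : List Ty) {A : Ty} {u : CTm} (hu : typeof Γ u = some A) (t : CTm) :
    typeof (Δ ++ Γ) (subst t Δ.length u) = typeof (Δ ++ A :: Γ) t := by
  induction t generalizing Δ with
  | var n =>
    rcases lt_trichotomy n Δ.length with h | rfl | h
    · simp [subst, typeof, h.ne, h.not_gt, List.getElem?_append_left h]
    · simpa [subst, typeof] using (typeof_lift [] Δ Γ u).trans hu
    · simp only [subst, typeof, h.ne', h, if_false, if_true]
      rw [List.getElem?_append_right (by omega), List.getElem?_append_right (by omega),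
        show n - Δ.length = n - 1 - Δ.length + 1 by omega, List.getElem?_cons_succ]
  | lam B t ih => exact congrArg (Option.map (Ty.arr B)) (ih (B :: Δ))
  | app a b iha ihb => simp only [subst, typeof, iha, ihb]

theorem typeof_pstar {Γ : List Ty} {t : CTm} {A : Ty} (ht : typeof Γ t = some A) :
    typeof Γ (pstar t) = some A := by
  induction t using pstar.induct generalizing Γ A with
  | case1 n => exact ht
  | case2 B t ih =>
    obtain ⟨C, hC, rfl⟩ := typeof_lam_eq_some.1 ht
    exact typeof_lam_eq_some.2 ⟨C, ih hC, rfl⟩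
  | case3 B t u iht ihu =>
    obtain ⟨X, hlam, hu⟩ := typeof_app_eq_some.1 ht
    obtain ⟨C, hC, hBC⟩ := typeof_lam_eq_some.1 hlam
    cases hBC
    simpa [pstar] using (typeof_subst [] Γ (ihu hu) (pstar t)).trans (iht hC)
  | case4 n u ihu =>
    obtain ⟨X, hn, hu⟩ := typeof_app_eq_some.1 ht
    exact typeof_app_eq_some.2 ⟨X, hn, ihu hu⟩
  | case5 a b u ihab ihu =>
    obtain ⟨X, hab, hu⟩ := typeof_app_eq_some.1 ht
    exact typeof_app_eq_some.2 ⟨X, ihab hab, ihu hu⟩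

theorem isLam_lift {d k : Nat} {t : CTm} : IsLam (lift d k t) ↔ IsLam t := by
  cases t with
  | var n => simp only [lift]; split <;> simp [IsLam]
  | lam | app => simp [lift, IsLam]

theorem isLam_of_isLam_subst {t u : CTm} {k : Nat} (h : IsLam (subst t k u)) :
    IsLam t ∨ t = var k ∧ IsLam u := by
  cases t with
  | var n =>
    simp only [subst] at h
    split_ifs at h with hn
    · exact .inr ⟨congrArg var hn, isLam_lift.1 h⟩
    all_goals exact h.elim
  | lam => exact .inl trivial
  | app => exact h.elim

theorem isLam_of_isLam_pstar_app {a b : CTm} (h : IsLam (pstar (app a b))) : IsLam a := by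
  cases a with
  | lam => trivial
  | var | app => exact h.elim

theorem redexBound_lift {e : Nat} (Δ₀ Δ Γ : List Ty) {u : CTm} (h : RedexBound e (Δ₀ ++ Γ) u) :
    RedexBound e (Δ₀ ++ (Δ ++ Γ)) (lift Δ.length Δ₀.length u) := by
  induction u generalizing Δ₀ with
  | var n => simp only [lift]; split <;> trivial
  | lam A t ih => exact ih (A :: Δ₀) h
  | app a b iha ihb =>
    obtain ⟨hhead, ha, hb⟩ := redexBound_app_iff.1 h
    refine redexBound_app_iff.2 ⟨fun hlam C hC => ?_, iha Δ₀ ha, ihb Δ₀ hb⟩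
    exact hhead (isLam_lift.1 hlam) C ((typeof_lift Δ₀ Δ Γ a).symm.trans hC)

/-- Substituting `u : A` may create redexes only where a variable of type `A` becomes an abstraction
in head position, and those have degree `A.deg`. -/
theorem redexBound_subst {e : Nat} (Δ Γ : List Ty) {A : Ty} {u : CTm} (hu : typeof Γ u = some A)
    (hA : A.deg ≤ e) (hbu : RedexBound e Γ u) {t : CTm} (hbt : RedexBound e (Δ ++ A :: Γ) t) :
    RedexBound e (Δ ++ Γ) (subst t Δ.length u) := by
  induction t generalizing Δ with
  | var n =>
    simp only [subst]
    split_ifs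
    · exact redexBound_lift [] Δ Γ hbu
    all_goals trivial
  | lam B t ih => exact ih (B :: Δ) hbt
  | app a b iha ihb =>
    obtain ⟨hhead, ha, hb⟩ := redexBound_app_iff.1 hbt
    refine redexBound_app_iff.2 ⟨fun hlam C hC => ?_, iha Δ ha, ihb Δ hb⟩
    rw [typeof_subst Δ Γ hu] at hC
    rcases isLam_of_isLam_subst hlam with ha_lam | ⟨rfl, -⟩
    · exact hhead ha_lam C hC
    · simp only [typeof, List.getElem?_append_right le_rfl, Nat.sub_self,
        List.getElem?_cons_zero, Option.some.injEq] at hC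
      exact hC ▸ hA

end CTm

theorem redexBound_pstar_general {Γ : List Ty} {t : CTm} {A : Ty} {d : Nat}
    (ht : CTm.typeof Γ t = some A) (hb : CTm.RedexBound d Γ t) :
    CTm.RedexBound (d - 1) Γ (CTm.pstar t) := by
  induction t using CTm.pstar.induct generalizing Γ A with
  | case1 n => trivial
  | case2 B t ih =>
    obtain ⟨C, hC, -⟩ := CTm.typeof_lam_eq_some.1 ht
    exact ih hC hb
  | case3 X t u iht ihu =>
    obtain ⟨Y, hlam, hu⟩ := CTm.typeof_app_eq_some.1 ht
    obtain ⟨hhead, hbt, hbu⟩ := CTm.redexBound_app_iff.1 hb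
    obtain ⟨C, hC, hXY⟩ := CTm.typeof_lam_eq_some.1 hlam
    cases hXY
    have hX := (Ty.deg_le_pred_of_deg_arr_le (hhead trivial _ hlam)).1
    simpa [CTm.pstar] using
      CTm.redexBound_subst [] Γ (CTm.typeof_pstar hu) hX (ihu hu hbu) (iht hC hbt)
  | case4 n u ihu =>
    obtain ⟨X, -, hu⟩ := CTm.typeof_app_eq_some.1 ht
    exact ⟨trivial, ihu hu hb.2⟩
  | case5 a b u ihab ihu =>
    obtain ⟨X, hab, hu⟩ := CTm.typeof_app_eq_some.1 ht
    obtain ⟨-, hbab, hbu⟩ := CTm.redexBound_app_iff.1 hb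
    refine CTm.redexBound_app_iff.2 ⟨fun hlam C hC => ?_, ihab hab hbab, ihu hu hbu⟩
    obtain ⟨Y, ha, -⟩ := CTm.typeof_app_eq_some.1 hab
    cases (CTm.typeof_pstar hab).symm.trans hC
    exact (Ty.deg_le_pred_of_deg_arr_le
      ((CTm.redexBound_app_iff.1 hbab).1 (CTm.isLam_of_isLam_pstar_app hlam) _ ha)).2

/-- if all redexes of a simply typed term `t` have degree at most
`d ≥ 1`, then all redexes of `t*` have degree at most `d - 1`. -/
theorem redexBound_pstar {Γ : List Ty} {t : CTm} {A : Ty} {d : Nat}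
    (hd : 1 ≤ d) (ht : CTm.typeof Γ t = some A) (hb : CTm.RedexBound d Γ t) :
    CTm.RedexBound (d - 1) Γ (CTm.pstar t) :=
  redexBound_pstar_general ht hb
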